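/- The series value at x = 1 is B(1) = 4/π, i.e., ∑_{n=0}^∞ ((1/(2n−1))·(1/4ⁿ)·C(2n,n))² = 4/π. -/

import Mathlib

/-!
With `c n = C(2n, n) / 4ⁿ`, the partial sums telescope:
`∑_{n ≤ N} (c n / (2n - 1))² = (4N + 1) c N²`, because `c (n+1) = c n (2n + 1) / (2n + 2)`.
On the other hand `(2N + 1) c N²` is the reciprocal of the `N`-th partial Wallis product,
so it tends to `2 / π`; as `(4N + 1) / (2N + 1) → 2`, the partial sums tend to `4 / π`.
-/

open Real Filter Finset Topology Nat

lemma Nat.centralBinom_mul_factorial_mul_factorial (n : ℕ) :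
    n.centralBinom * n ! * n ! = (2 * n)! := by
  have h := Nat.choose_mul_factorial_mul_factorial (Nat.le_mul_of_pos_left n two_pos)
  rwa [two_mul, Nat.add_sub_cancel, ← two_mul, ← Nat.centralBinom_eq_two_mul_choose] at h

noncomputable def centralBinomDivFourPow (n : ℕ) : ℝ := n.centralBinom / 4 ^ n

local notation "c" => centralBinomDivFourPow

lemma centralBinomDivFourPow_succ (n : ℕ) : c (n + 1) = c n * (2 * n + 1) / (2 * n + 2) := by
  have h : ((n + 1 : ℕ) : ℝ) * (n + 1).centralBinom = 2 * (2 * n + 1) * n.centralBinom := by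
    exact_mod_cast Nat.succ_mul_centralBinom_succ n
  unfold centralBinomDivFourPow
  push_cast at h
  rw [pow_succ]
  field_simp
  linear_combination 2 * h

lemma sum_range_succ_sq_centralBinomDivFourPow_div (N : ℕ) :
    ∑ n ∈ range (N + 1), (c n / (2 * n - 1)) ^ 2 = (4 * N + 1) * c N ^ 2 := by
  induction N with
  | zero => simp [centralBinomDivFourPow]
  | succ N ih =>
    rw [sum_range_succ, ih, centralBinomDivFourPow_succ]
    have h_odd : 2 * ((N + 1 : ℕ) : ℝ) - 1 = 2 * N + 1 := by push_cast; ring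
    rw [h_odd]
    push_cast
    have h₁ : (2 * (N : ℝ) + 1) ≠ 0 := by positivity
    have h₂ : (2 * (N : ℝ) + 2) ≠ 0 := by positivity
    field_simp
    ring

lemma mul_sq_centralBinomDivFourPow_eq_inv_W (n : ℕ) :
    (2 * n + 1) * c n ^ 2 = (Real.Wallis.W n)⁻¹ := by
  have h4 : (2 : ℝ) ^ (4 * n) = (4 ^ n) ^ 2 := by
    rw [← pow_mul, show (4 : ℝ) = 2 ^ 2 by norm_num, ← pow_mul]
    ring_nf
  rw [Real.Wallis.W_eq_factorial_ratio, inv_div, ← Nat.centralBinom_mul_factorial_mul_factorial,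
    h4, centralBinomDivFourPow]
  push_cast
  have : (n ! : ℝ) ≠ 0 := by positivity
  field_simp

lemma tendsto_mul_sq_centralBinomDivFourPow :
    Tendsto (fun n : ℕ => (2 * n + 1) * c n ^ 2) atTop (𝓝 (2 / π)) := by
  simp_rw [mul_sq_centralBinomDivFourPow_eq_inv_W, ← inv_div π 2]
  exact Real.Wallis.tendsto_W_nhds_pi_div_two.inv₀ pi_div_two_pos.ne'

lemma tendsto_four_mul_add_one_mul_sq_centralBinomDivFourPow :
    Tendsto (fun n : ℕ => (4 * n + 1) * c n ^ 2) atTop (𝓝 (4 / π)) := by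
  have h_odd : Tendsto (fun n : ℕ => 2 * (n : ℝ) + 1) atTop atTop :=
    (tendsto_natCast_atTop_atTop.const_mul_atTop two_pos).atTop_add tendsto_const_nhds
  have h_ratio : Tendsto (fun n : ℕ => 2 - (2 * (n : ℝ) + 1)⁻¹) atTop (𝓝 2) := by
    simpa using tendsto_const_nhds.sub (tendsto_inv_atTop_zero.comp h_odd)
  rw [show 4 / π = 2 * (2 / π) by ring]
  refine (h_ratio.mul tendsto_mul_sq_centralBinomDivFourPow).congr fun n => ?_
  have : (2 * (n : ℝ) + 1) ≠ 0 := by positivity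
  field_simp
  ring

lemma hasSum_sq_centralBinomDivFourPow_div :
    HasSum (fun n : ℕ => (c n / (2 * n - 1)) ^ 2) (4 / π) := by
  rw [hasSum_iff_tendsto_nat_of_nonneg (fun n => sq_nonneg _), ← tendsto_add_atTop_iff_nat 1]
  simpa only [sum_range_succ_sq_centralBinomDivFourPow_div]
    using tendsto_four_mul_add_one_mul_sq_centralBinomDivFourPow

theorem series_value_at_one :
    ∑' n : ℕ, ((1 / (2 * (n : ℝ) - 1)) * (1 / 4 ^ n) * (Nat.choose (2 * n) n)) ^ 2 =
      4 / Real.pi := by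
  convert hasSum_sq_centralBinomDivFourPow_div.tsum_eq using 3 with n
  rw [centralBinomDivFourPow, Nat.centralBinom_eq_two_mul_choose]
  ring
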